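/- arXiv:2407.16998 — 2 statements merged into one kernel-verified Lean document; each statement's English description precedes it below -/
import Mathlib

section
/- Let A ∈ ℝ^{m×n} and ε ≥ 0, and suppose that either A has full row rank or ε > 0. Let x ∈ ℝⁿ satisfy ‖Ax‖ > ε. Then there exists a unique positive real number τ_x satisfying τ_x ‖(AAᵀ + ε τ_x I)⁻¹ Ax‖ = 1, and moreover this τ_x satisfies 0 < τ_x ≤ σ_max(A)² / (‖Ax‖ − ε). -/
/-!
Diagonalise `A Aᵀ = ∑ λᵢ uᵢ uᵢᵀ` and put `cᵢ = ⟨uᵢ, A x⟩`. Full row rank or `ε > 0` makes every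
`λᵢ + ε τ` positive, and then `(τ ‖(A Aᵀ + ε τ I)⁻¹ A x‖)² = ∑ cᵢ² (τ / (λᵢ + ε τ))²`. Since `A x`
lies in the range of `A`, `cᵢ ≠ 0` forces `λᵢ = ‖Aᵀ uᵢ‖² > 0`, so every nonzero term increases
strictly and continuously from `0` on `(0, ∞)`: uniqueness is strict monotonicity and existence the
intermediate value theorem. For the bound, with `σ = σ_max(A) = ‖Aᵀ‖`, the vector
`y = (A Aᵀ + ε τ I)⁻¹ A x` satisfies `‖A x‖ ≤ ‖A Aᵀ y‖ + ε τ ‖y‖ ≤ (σ² + ε τ) ‖y‖`, so `τ ‖y‖ ≤ 1`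
forces `τ (‖A x‖ - ε) ≤ σ²`; at `τ = (σ² + 1) / (‖A x‖ - ε)` this shows that the function
exceeds `1` somewhere.
-/

/-- Euclidean norm of a vector in ℝ^k. -/
noncomputable def vecNorm {k : ℕ} (v : Fin k → ℝ) : ℝ := Real.sqrt (∑ i, v i ^ 2)

/-- Largest singular value of `A`, i.e. the operator 2-norm of `A`
(supremum of `‖A x‖` over the Euclidean unit ball). -/
noncomputable def sigmaMax {m n : ℕ} (A : Matrix (Fin m) (Fin n) ℝ) : ℝ :=
  ⨆ x : {v : Fin n → ℝ // vecNorm v ≤ 1}, vecNorm (A.mulVec x.1)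

open Matrix WithLp
open scoped Matrix.Norms.L2Operator

lemma vecNorm_eq_norm_toLp {k : ℕ} (v : Fin k → ℝ) : vecNorm v = ‖toLp 2 v‖ := by
  simp [vecNorm, EuclideanSpace.norm_eq]

lemma sigmaMax_eq_l2_opNorm {m n : ℕ} (A : Matrix (Fin m) (Fin n) ℝ) : sigmaMax A = ‖A‖ := by
  have hle : ∀ v : Fin n → ℝ, vecNorm v ≤ 1 → vecNorm (A *ᵥ v) ≤ ‖A‖ := fun v hv => by
    rw [vecNorm_eq_norm_toLp] at hv ⊢
    calc ‖toLp 2 (A *ᵥ v)‖ ≤ ‖A‖ * ‖toLp 2 v‖ := A.l2_opNorm_mulVec (toLp 2 v)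
      _ ≤ ‖A‖ := mul_le_of_le_one_right (norm_nonneg A) hv
  have : Nonempty {v : Fin n → ℝ // vecNorm v ≤ 1} := ⟨⟨0, by simp [vecNorm]⟩⟩
  refine le_antisymm (ciSup_le fun v => hle v.1 v.2) ?_
  rw [l2_opNorm_def, ← ContinuousLinearMap.sSup_unitClosedBall_eq_norm]
  refine csSup_le ((Metric.nonempty_closedBall.mpr zero_le_one).image _) ?_
  rintro - ⟨w, hw, rfl⟩
  have hw' : vecNorm (ofLp w) ≤ 1 := by simpa [vecNorm_eq_norm_toLp] using hw
  refine le_ciSup_of_le ⟨‖A‖, ?_⟩ ⟨ofLp w, hw'⟩ ?_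
  · rintro - ⟨v, rfl⟩
    exact hle v.1 v.2
  · exact (vecNorm_eq_norm_toLp _).ge

section Spectral

lemma Matrix.mulVec_mulVec_inv_of_isUnit {ι R : Type*} [Fintype ι] [DecidableEq ι] [CommRing R]
    {M : Matrix ι ι R} (hM : IsUnit M) (b : ι → R) : M *ᵥ (M⁻¹ *ᵥ b) = b := by
  rw [mulVec_mulVec, mul_nonsing_inv _ ((isUnit_iff_isUnit_det _).mp hM), one_mulVec]

variable {ι : Type*} [Fintype ι]

lemma OrthonormalBasis.sum_sq_dotProduct {ι' : Type*} [Fintype ι']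
    (u : OrthonormalBasis ι' ℝ (EuclideanSpace ℝ ι)) (v : ι → ℝ) :
    ∑ i, (⇑(u i) ⬝ᵥ v) ^ 2 = ‖toLp 2 v‖ ^ 2 := by
  rw [← u.sum_sq_inner_right]
  simp [EuclideanSpace.inner_eq_star_dotProduct, dotProduct_comm]

lemma OrthonormalBasis.dotProduct_ne_zero {ι' : Type*} [Fintype ι']
    (u : OrthonormalBasis ι' ℝ (EuclideanSpace ℝ ι)) {v : ι → ℝ} (hv : v ≠ 0) :
    (fun i => ⇑(u i) ⬝ᵥ v) ≠ 0 := fun h => by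
  have hnorm := u.sum_sq_dotProduct v
  simp [show ∀ i, ⇑(u i) ⬝ᵥ v = 0 from congrFun h, eq_comm (a := (0 : ℝ))] at hnorm
  exact hv hnorm

variable [DecidableEq ι] {B : Matrix ι ι ℝ} (hB : B.IsHermitian)

lemma Matrix.IsHermitian.eigenvectorBasis_dotProduct_add_smul_one_mulVec (s : ℝ) (i : ι)
    (v : ι → ℝ) :
    ⇑(hB.eigenvectorBasis i) ⬝ᵥ ((B + s • 1) *ᵥ v) =
      (hB.eigenvalues i + s) * (⇑(hB.eigenvectorBasis i) ⬝ᵥ v) := by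
  have hBt : Bᵀ = B := by simpa [conjTranspose_eq_transpose_of_trivial] using hB.eq
  rw [dotProduct_mulVec, ← mulVec_transpose, transpose_add, hBt, add_mulVec,
    hB.mulVec_eigenvectorBasis]
  simp [add_mul, dotProduct_comm, smul_mulVec, one_mulVec]

lemma Matrix.IsHermitian.isUnit_add_smul_one {s : ℝ} (hs : ∀ i, hB.eigenvalues i + s ≠ 0) :
    IsUnit (B + s • 1) := by
  rw [← mulVec_injective_iff_isUnit]
  intro v w hvw
  by_contra hne
  refine hB.eigenvectorBasis.dotProduct_ne_zero (sub_ne_zero.mpr hne) (funext fun i => ?_)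
  have := congrArg (⇑(hB.eigenvectorBasis i) ⬝ᵥ ·) hvw
  simp only [hB.eigenvectorBasis_dotProduct_add_smul_one_mulVec] at this
  rw [Pi.zero_apply, dotProduct_sub, mul_left_cancel₀ (hs i) this, sub_self]

lemma Matrix.IsHermitian.norm_inv_add_smul_one_mulVec_sq {s : ℝ}
    (hs : ∀ i, hB.eigenvalues i + s ≠ 0) (b : ι → ℝ) :
    ‖toLp 2 ((B + s • 1)⁻¹ *ᵥ b)‖ ^ 2 =
      ∑ i, (⇑(hB.eigenvectorBasis i) ⬝ᵥ b / (hB.eigenvalues i + s)) ^ 2 := by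
  have hsolve := mulVec_mulVec_inv_of_isUnit (hB.isUnit_add_smul_one hs) b
  rw [← hB.eigenvectorBasis.sum_sq_dotProduct]
  conv_rhs => rw [← hsolve]
  simp only [hB.eigenvectorBasis_dotProduct_add_smul_one_mulVec, mul_div_cancel_left₀ _ (hs _)]

lemma Matrix.norm_toLp_le_mul_norm_inv_add_smul_one_mulVec {ι : Type*} [Fintype ι] [DecidableEq ι]
    {B : Matrix ι ι ℝ} {s : ℝ} (hunit : IsUnit (B + s • 1)) (hs : 0 ≤ s) (b : ι → ℝ) :
    ‖toLp 2 b‖ ≤ (‖B‖ + s) * ‖toLp 2 ((B + s • 1)⁻¹ *ᵥ b)‖ := by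
  have hb := mulVec_mulVec_inv_of_isUnit hunit b
  set y := (B + s • 1)⁻¹ *ᵥ b
  rw [add_mulVec, smul_mulVec, one_mulVec] at hb
  calc ‖toLp 2 b‖ = ‖toLp 2 (B *ᵥ y) + s • toLp 2 y‖ := by rw [← hb]; rfl
    _ ≤ ‖toLp 2 (B *ᵥ y)‖ + ‖s • toLp 2 y‖ := norm_add_le _ _
    _ ≤ ‖B‖ * ‖toLp 2 y‖ + s * ‖toLp 2 y‖ := by
      rw [norm_smul, Real.norm_of_nonneg hs]
      gcongr
      exact B.l2_opNorm_mulVec (toLp 2 y)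
    _ = (‖B‖ + s) * ‖toLp 2 y‖ := by ring

end Spectral

section MulTranspose

variable {ι κ : Type*} [Fintype κ] (A : Matrix ι κ ℝ)

lemma Matrix.isHermitian_mul_transpose_self : (A * Aᵀ).IsHermitian := by
  simpa [conjTranspose_eq_transpose_of_trivial] using isHermitian_mul_conjTranspose_self A

variable [Fintype ι] [DecidableEq ι]

lemma Matrix.l2_opNorm_mul_transpose_self [DecidableEq κ] : ‖A * Aᵀ‖ = ‖A‖ ^ 2 := by
  have h := l2_opNorm_conjTranspose_mul_self Aᴴ
  rw [conjTranspose_conjTranspose, l2_opNorm_conjTranspose,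
    conjTranspose_eq_transpose_of_trivial] at h
  rw [h, sq]

variable {A} {ε τ : ℝ}

lemma Matrix.eigenvalues_mul_transpose_self_add_pos (hB : (A * Aᵀ).IsHermitian)
    (hrank : LinearIndependent ℝ A.row ∨ 0 < ε) (hε : 0 ≤ ε) (hτ : 0 < τ) (i : ι) :
    0 < hB.eigenvalues i + ε * τ := by
  rcases hrank with hrow | hε
  · have hpos : (A * Aᵀ).PosDef := by
      simpa [conjTranspose_eq_transpose_of_trivial] using
        PosDef.mul_conjTranspose_self A (vecMul_injective_iff.mpr hrow)
    exact add_pos_of_pos_of_nonneg (hpos.eigenvalues_pos i) (by positivity)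
  · have hsemi : (A * Aᵀ).PosSemidef := by
      simpa [conjTranspose_eq_transpose_of_trivial] using posSemidef_self_mul_conjTranspose A
    exact add_pos_of_nonneg_of_pos (hsemi.eigenvalues_nonneg i) (by positivity)

lemma Matrix.eigenvalues_mul_transpose_self_pos_of_dotProduct_mulVec_ne_zero
    (hB : (A * Aᵀ).IsHermitian) {i : ι} {x : κ → ℝ}
    (hx : ⇑(hB.eigenvectorBasis i) ⬝ᵥ (A *ᵥ x) ≠ 0) : 0 < hB.eigenvalues i := by
  have hsemi : (A * Aᵀ).PosSemidef := by
    simpa [conjTranspose_eq_transpose_of_trivial] using posSemidef_self_mul_conjTranspose A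
  refine (hsemi.eigenvalues_nonneg i).lt_of_ne fun h0 => hx ?_
  set u : ι → ℝ := ⇑(hB.eigenvectorBasis i)
  have hAu : Aᵀ *ᵥ u ⬝ᵥ Aᵀ *ᵥ u = 0 := by
    rw [mulVec_transpose, ← dotProduct_mulVec, ← mulVec_transpose, mulVec_mulVec,
      hB.mulVec_eigenvectorBasis, ← h0, zero_smul, dotProduct_zero]
  rw [dotProduct_mulVec, ← mulVec_transpose, dotProduct_self_eq_zero.mp hAu, zero_dotProduct]

lemma Matrix.sq_mul_norm_inv_mul_transpose_add_smul_one_mulVec (hB : (A * Aᵀ).IsHermitian)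
    (hrank : LinearIndependent ℝ A.row ∨ 0 < ε) (hε : 0 ≤ ε) (hτ : 0 < τ) (b : ι → ℝ) :
    (τ * ‖toLp 2 ((A * Aᵀ + (ε * τ) • 1)⁻¹ *ᵥ b)‖) ^ 2 =
      ∑ i, (⇑(hB.eigenvectorBasis i) ⬝ᵥ b) ^ 2 * (τ / (hB.eigenvalues i + ε * τ)) ^ 2 := by
  rw [mul_pow, hB.norm_inv_add_smul_one_mulVec_sq
    (fun i => (eigenvalues_mul_transpose_self_add_pos hB hrank hε hτ i).ne'), Finset.mul_sum]
  congr 1 with i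
  ring

lemma Matrix.mul_sub_le_l2_opNorm_sq [DecidableEq κ] (hrank : LinearIndependent ℝ A.row ∨ 0 < ε)
    (hε : 0 ≤ ε) (hτ : 0 < τ) (b : ι → ℝ)
    (hle : τ * ‖toLp 2 ((A * Aᵀ + (ε * τ) • 1)⁻¹ *ᵥ b)‖ ≤ 1) :
    τ * (‖toLp 2 b‖ - ε) ≤ ‖A‖ ^ 2 := by
  have hB := isHermitian_mul_transpose_self A
  have hunit := hB.isUnit_add_smul_one fun i =>
    (eigenvalues_mul_transpose_self_add_pos hB hrank hε hτ i).ne'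
  have hb := norm_toLp_le_mul_norm_inv_add_smul_one_mulVec hunit (by positivity) b
  rw [l2_opNorm_mul_transpose_self] at hb
  have hετ : 0 ≤ ‖A‖ ^ 2 + ε * τ := by positivity
  nlinarith [mul_le_mul_of_nonneg_left hle hετ]

end MulTranspose

lemma IsPreconnected.existsUnique_eq_of_injOn {X α : Type*} [TopologicalSpace X]
    [TopologicalSpace α] [LinearOrder α] [OrderClosedTopology α] {s : Set X} {f : X → α}
    (hs : IsPreconnected s) (hf : ContinuousOn f s) (hinj : Set.InjOn f s) {a b : X} {y : α}
    (ha : a ∈ s) (hb : b ∈ s) (hay : f a ≤ y) (hyb : y ≤ f b) : ∃! t, t ∈ s ∧ f t = y := by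
  obtain ⟨t, hts, rfl⟩ := hs.intermediate_value ha hb hf ⟨hay, hyb⟩
  exact ⟨t, ⟨hts, rfl⟩, fun t' ht' => hinj ht'.1 hts ht'.2⟩

section Scalar

open Set Filter Topology

lemma strictMonoOn_div_add_mul {l ε : ℝ} (hl : 0 < l) (hε : 0 ≤ ε) :
    StrictMonoOn (fun t => t / (l + ε * t)) (Ioi 0) := by
  intro s hs t ht hst
  simp only [mem_Ioi] at hs ht
  rw [div_lt_div_iff₀ (by positivity) (by positivity)]
  nlinarith

variable {ι : Type*} [Fintype ι] {c l : ι → ℝ} {ε : ℝ}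

lemma strictMonoOn_sum_sq_mul_sq_div_add_mul (hε : 0 ≤ ε) (hl : ∀ i, c i ≠ 0 → 0 < l i)
    (hc : c ≠ 0) : StrictMonoOn (fun t => ∑ i, c i ^ 2 * (t / (l i + ε * t)) ^ 2) (Ioi 0) := by
  intro s hs t ht hst
  have hterm : ∀ i, c i ≠ 0 →
      c i ^ 2 * (s / (l i + ε * s)) ^ 2 < c i ^ 2 * (t / (l i + ε * t)) ^ 2 := fun i hi => by
    have hli := hl i hi
    have hs' : 0 < s := hs
    exact mul_lt_mul_of_pos_left (pow_lt_pow_left₀ (strictMonoOn_div_add_mul hli hε hs ht hst)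
      (by positivity) two_ne_zero) (by positivity)
  obtain ⟨j, hj⟩ := Function.ne_iff.mp hc
  refine Finset.sum_lt_sum (fun i _ => ?_) ⟨j, Finset.mem_univ j, hterm j hj⟩
  by_cases hi : c i = 0
  · simp [hi]
  · exact (hterm i hi).le

lemma continuousOn_sum_sq_mul_sq_div_add_mul (hε : 0 ≤ ε) (hl : ∀ i, c i ≠ 0 → 0 < l i) :
    ContinuousOn (fun t => ∑ i, c i ^ 2 * (t / (l i + ε * t)) ^ 2) (Ioi 0) := by
  refine continuousOn_finsetSum _ fun i _ => ?_
  by_cases hi : c i = 0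
  · simpa [hi] using continuousOn_const
  · have hli := hl i hi
    refine ContinuousOn.mul continuousOn_const (ContinuousOn.pow (ContinuousOn.div
      continuousOn_id (by fun_prop) fun t ht => ?_) 2)
    have ht' : 0 < t := ht
    positivity

lemma sum_sq_mul_sq_div_add_mul_le (hε : 0 ≤ ε) (hl : ∀ i, c i ≠ 0 → 0 < l i) {t : ℝ}
    (ht : 0 < t) :
    ∑ i, c i ^ 2 * (t / (l i + ε * t)) ^ 2 ≤ (∑ i, c i ^ 2 / l i ^ 2) * t ^ 2 := by
  rw [Finset.sum_mul]
  refine Finset.sum_le_sum fun i _ => ?_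
  by_cases hi : c i = 0
  · simp [hi]
  · have hli := hl i hi
    calc c i ^ 2 * (t / (l i + ε * t)) ^ 2 ≤ c i ^ 2 * (t / l i) ^ 2 := by
          gcongr
          nlinarith
      _ = c i ^ 2 / l i ^ 2 * t ^ 2 := by ring

lemma tendsto_sum_sq_mul_sq_div_add_mul_nhdsGT_zero (hε : 0 ≤ ε) (hl : ∀ i, c i ≠ 0 → 0 < l i) :
    Tendsto (fun t => ∑ i, c i ^ 2 * (t / (l i + ε * t)) ^ 2) (𝓝[>] 0) (𝓝 0) := by
  have hK : Tendsto (fun t : ℝ => (∑ i, c i ^ 2 / l i ^ 2) * t ^ 2) (𝓝[>] 0) (𝓝 0) :=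
    ((continuous_const.mul (continuous_pow 2)).tendsto' 0 0 (by simp)).mono_left
      nhdsWithin_le_nhds
  refine squeeze_zero' (Eventually.of_forall fun t => by positivity)
    (eventually_nhdsWithin_of_forall fun t ht => ?_) hK
  exact sum_sq_mul_sq_div_add_mul_le hε hl ht

end Scalar

theorem stmt1 {m n : ℕ} (A : Matrix (Fin m) (Fin n) ℝ) (ε : ℝ) (hε : 0 ≤ ε)
    (hrank : LinearIndependent ℝ (fun i : Fin m => A i) ∨ 0 < ε)
    (x : Fin n → ℝ) (hx : ε < vecNorm (A.mulVec x)) :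
    (∃! τ : ℝ, 0 < τ ∧
      τ * vecNorm ((A * A.transpose +
        (ε * τ) • (1 : Matrix (Fin m) (Fin m) ℝ))⁻¹.mulVec (A.mulVec x)) = 1) ∧
    ∀ τ : ℝ, 0 < τ →
      τ * vecNorm ((A * A.transpose +
        (ε * τ) • (1 : Matrix (Fin m) (Fin m) ℝ))⁻¹.mulVec (A.mulVec x)) = 1 →
      τ ≤ sigmaMax A ^ 2 / (vecNorm (A.mulVec x) - ε) := by
  simp only [vecNorm_eq_norm_toLp, sigmaMax_eq_l2_opNorm] at hx ⊢
  have hB := isHermitian_mul_transpose_self A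
  set b := A *ᵥ x
  set c : Fin m → ℝ := fun i => ⇑(hB.eigenvectorBasis i) ⬝ᵥ b
  set φ : ℝ → ℝ := fun t => ∑ i, c i ^ 2 * (t / (hB.eigenvalues i + ε * t)) ^ 2
  have hl : ∀ i, c i ≠ 0 → 0 < hB.eigenvalues i := fun i =>
    eigenvalues_mul_transpose_self_pos_of_dotProduct_mulVec_ne_zero hB
  have hc : c ≠ 0 := hB.eigenvectorBasis.dotProduct_ne_zero fun hb => by
    simp [hb] at hx
    linarith
  have hsq : ∀ τ, 0 < τ → (τ * ‖toLp 2 ((A * Aᵀ + (ε * τ) • 1)⁻¹ *ᵥ b)‖) ^ 2 = φ τ :=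
    fun τ hτ => sq_mul_norm_inv_mul_transpose_add_smul_one_mulVec hB hrank hε hτ b
  refine ⟨?_, fun τ hτ h => (le_div_iff₀ (by linarith)).mpr
    (mul_sub_le_l2_opNorm_sq hrank hε hτ b h.le)⟩
  obtain ⟨t₀, ht₀φ, ht₀⟩ := (((tendsto_sum_sq_mul_sq_div_add_mul_nhdsGT_zero hε hl).eventually
    (ge_mem_nhds zero_lt_one)).and self_mem_nhdsWithin).exists
  set T := (‖A‖ ^ 2 + 1) / (‖toLp 2 b‖ - ε)
  have hT : 0 < T := div_pos (by positivity) (by linarith)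
  have hTφ : 1 ≤ φ T := by
    by_contra! h
    rw [← hsq T hT, sq_lt_one_iff₀ (by positivity)] at h
    have := mul_sub_le_l2_opNorm_sq hrank hε hT b h.le
    rw [div_mul_cancel₀ _ (by linarith)] at this
    linarith
  refine (existsUnique_congr fun τ => and_congr_right fun hτ => ?_).mpr
    (isPreconnected_Ioi.existsUnique_eq_of_injOn (continuousOn_sum_sq_mul_sq_div_add_mul hε hl)
      (strictMonoOn_sum_sq_mul_sq_div_add_mul hε hl hc).injOn ht₀ hT ht₀φ hTφ)
  change _ ↔ φ τ = 1
  rw [← hsq τ hτ, pow_eq_one_iff_of_nonneg (by positivity) two_ne_zero]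
end

section
/- Let A ∈ ℝ^{m×n}, let ε > 0, and let x ∈ ℝⁿ with Ax ≠ 0. Then the function φ : (0,∞) → ℝ defined by φ(τ) = ‖τ (AAᵀ + ε τ I)⁻¹ A x‖² is strictly increasing on (0,∞). -/
lemma vecNorm_sq {k : ℕ} (v : Fin k → ℝ) : vecNorm v ^ 2 = ∑ i, v i ^ 2 :=
  Real.sq_sqrt (Finset.sum_nonneg fun i _ => sq_nonneg _)

open Matrix in
theorem stmt6 {m n : ℕ} (A : Matrix (Fin m) (Fin n) ℝ) (ε : ℝ) (hε : 0 < ε)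
    (x : Fin n → ℝ) (hx : A.mulVec x ≠ 0) :
    StrictMonoOn
      (fun τ : ℝ => vecNorm (τ • ((A * A.transpose +
        (ε * τ) • (1 : Matrix (Fin m) (Fin m) ℝ))⁻¹.mulVec (A.mulVec x))) ^ 2)
      (Set.Ioi (0 : ℝ)) := by
  classical
  set b : Fin m → ℝ := A.mulVec x with hbdef
  set B : Matrix (Fin m) (Fin m) ℝ := A * A.transpose with hBdef
  have hB : B.IsHermitian := by
    rw [hBdef, ← Matrix.conjTranspose_eq_transpose_of_trivial]
    exact Matrix.isHermitian_mul_conjTranspose_self A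
  set U : Matrix (Fin m) (Fin m) ℝ := (hB.eigenvectorUnitary : Matrix (Fin m) (Fin m) ℝ)
    with hUdef
  set μ : Fin m → ℝ := hB.eigenvalues with hμdef
  have hBpsd : B.PosSemidef := by
    rw [hBdef, ← Matrix.conjTranspose_eq_transpose_of_trivial]
    exact Matrix.posSemidef_self_mul_conjTranspose A
  have hμnn : ∀ i, 0 ≤ μ i := fun i => hBpsd.eigenvalues_nonneg i
  have hUsU : star U * U = 1 := Unitary.coe_star_mul_self hB.eigenvectorUnitary
  have hUUs : U * star U = 1 := Unitary.coe_mul_star_self hB.eigenvectorUnitary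
  have hspec : B = U * Matrix.diagonal μ * star U := by
    have := hB.spectral_theorem
    rwa [RCLike.ofReal_real_eq_id, Function.id_comp] at this
  have hstarU : star U = U.transpose := by
    rw [Matrix.star_eq_conjTranspose, Matrix.conjTranspose_eq_transpose_of_trivial]
  -- vector c : coordinates of b in the eigenbasis
  set c : Fin m → ℝ := (star U).mulVec b with hcdef
  -- norm preservation
  have hnorm : ∀ w : Fin m → ℝ, ∑ i, (U.mulVec w) i ^ 2 = ∑ i, w i ^ 2 := by
    intro w
    have hdot : ∀ v : Fin m → ℝ, ∑ i, v i ^ 2 = dotProduct v v := by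
      intro v; simp [dotProduct, sq]
    rw [hdot, hdot, Matrix.dotProduct_mulVec]
    have : Matrix.vecMul (U.mulVec w) U = w := by
      have h1 : U.mulVec w = Matrix.vecMul w U.transpose := by
        rw [← Matrix.mulVec_transpose, Matrix.transpose_transpose]
      rw [h1, Matrix.vecMul_vecMul, ← hstarU, hUsU, Matrix.vecMul_one]
    rw [this]
  -- inverse formula
  have hinv : ∀ t : ℝ, 0 < t →
      (B + (ε * t) • (1 : Matrix (Fin m) (Fin m) ℝ))⁻¹
        = U * Matrix.diagonal (fun i => (μ i + ε * t)⁻¹) * star U := by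
    intro t ht
    have hden : ∀ i, μ i + ε * t ≠ 0 := fun i =>
      ne_of_gt (by have := hμnn i; positivity)
    have hM : B + (ε * t) • (1 : Matrix (Fin m) (Fin m) ℝ)
        = U * Matrix.diagonal (fun i => μ i + ε * t) * star U := by
      have h1 : Matrix.diagonal (fun i : Fin m => μ i + ε * t)
          = Matrix.diagonal μ + (ε * t) • (1 : Matrix (Fin m) (Fin m) ℝ) := by
        rw [Matrix.smul_one_eq_diagonal, Matrix.diagonal_add]
      rw [h1, Matrix.mul_add, Matrix.add_mul, ← hspec]
      congr 1
      rw [Matrix.mul_smul, Matrix.mul_one, Matrix.smul_mul, hUUs]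
    apply Matrix.inv_eq_right_inv
    rw [hM, Matrix.mul_assoc, Matrix.mul_assoc, ← Matrix.mul_assoc (star U),
      ← Matrix.mul_assoc (star U), hUsU, Matrix.one_mul,
      ← Matrix.mul_assoc (Matrix.diagonal _), Matrix.diagonal_mul_diagonal,
      ← Matrix.mul_assoc]
    have : (fun i => (μ i + ε * t) * (μ i + ε * t)⁻¹) = fun _ : Fin m => (1 : ℝ) := by
      funext i; exact mul_inv_cancel₀ (hden i)
    rw [this, Matrix.diagonal_one, Matrix.mul_one, hUUs]
  -- value formula
  have hval : ∀ t : ℝ, 0 < t →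
      vecNorm (t • ((B + (ε * t) • (1 : Matrix (Fin m) (Fin m) ℝ))⁻¹.mulVec b)) ^ 2
        = ∑ i, (t * (μ i + ε * t)⁻¹) ^ 2 * c i ^ 2 := by
    intro t ht
    rw [hinv t ht, vecNorm_sq]
    have h1 : (U * Matrix.diagonal (fun i => (μ i + ε * t)⁻¹) * star U).mulVec b
        = U.mulVec ((Matrix.diagonal (fun i => (μ i + ε * t)⁻¹)).mulVec c) := by
      rw [← Matrix.mulVec_mulVec, ← Matrix.mulVec_mulVec, hcdef]
    rw [h1, ← Matrix.mulVec_smul, hnorm]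
    refine Finset.sum_congr rfl fun i _ => ?_
    simp only [Pi.smul_apply, Matrix.mulVec_diagonal, smul_eq_mul]
    ring
  -- c ≠ 0
  have hcne : c ≠ 0 := by
    intro h
    apply hx
    have : b = (U * star U).mulVec b := by rw [hUUs, Matrix.one_mulVec]
    rw [← Matrix.mulVec_mulVec, ← hcdef, h, Matrix.mulVec_zero] at this
    exact this
  obtain ⟨j, hj⟩ := Function.ne_iff.mp hcne
  -- positivity of eigenvalues on support of c
  have hpos : ∀ i, c i ≠ 0 → 0 < μ i := by
    intro i hi
    rcases (hμnn i).lt_or_eq with h | h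
    · exact h
    exfalso
    set v : Fin m → ℝ := ⇑(hB.eigenvectorBasis i) with hvdef
    have hBv : B.mulVec v = 0 := by
      rw [hvdef, hB.mulVec_eigenvectorBasis, ← hμdef, ← h, zero_smul]
    have hATv : A.transpose.mulVec v = 0 := by
      have h0 : dotProduct (A.transpose.mulVec v) (A.transpose.mulVec v) = 0 := by
        have e1 : dotProduct v (B.mulVec v)
            = dotProduct (A.transpose.mulVec v) (A.transpose.mulVec v) := by
          rw [hBdef, ← Matrix.mulVec_mulVec, Matrix.dotProduct_mulVec,
            ← Matrix.mulVec_transpose]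
        rw [hBv, dotProduct_zero] at e1
        exact e1.symm
      funext k
      have hnn : ∀ k ∈ Finset.univ, 0 ≤ (A.transpose.mulVec v) k * (A.transpose.mulVec v) k :=
        fun k _ => mul_self_nonneg _
      have := (Finset.sum_eq_zero_iff_of_nonneg hnn).mp h0 k (Finset.mem_univ k)
      exact mul_self_eq_zero.mp this
    apply hi
    have hci : c i = dotProduct v b := by
      rw [hcdef, hstarU]
      simp only [Matrix.mulVec, dotProduct, Matrix.transpose_apply]
      refine Finset.sum_congr rfl fun k _ => ?_
      rw [hUdef, Matrix.IsHermitian.eigenvectorUnitary_apply, hvdef]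
    rw [hci, hbdef, Matrix.dotProduct_mulVec, ← Matrix.mulVec_transpose, hATv,
      zero_dotProduct]
  -- main monotonicity
  intro σ hσ τ hτ hlt
  have hσ0 : (0 : ℝ) < σ := hσ
  have hτ0 : (0 : ℝ) < τ := hτ
  dsimp only
  rw [hval σ hσ0, hval τ hτ0]
  have hj' : c j ≠ 0 := hj
  have key : ∀ i, 0 < μ i → σ * (μ i + ε * σ)⁻¹ < τ * (μ i + ε * τ)⁻¹ := by
    intro i hμi
    rw [← div_eq_mul_inv, ← div_eq_mul_inv,
      div_lt_div_iff₀ (by positivity) (by positivity)]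
    nlinarith
  have keyle : ∀ i, σ * (μ i + ε * σ)⁻¹ ≤ τ * (μ i + ε * τ)⁻¹ := by
    intro i
    have h1 : (0:ℝ) < μ i + ε * σ := by have := hμnn i; positivity
    have h2 : (0:ℝ) < μ i + ε * τ := by have := hμnn i; positivity
    rw [← div_eq_mul_inv, ← div_eq_mul_inv, div_le_div_iff₀ h1 h2]
    nlinarith [hμnn i]
  apply Finset.sum_lt_sum
  · intro i _
    refine mul_le_mul_of_nonneg_right ?_ (sq_nonneg _)
    exact pow_le_pow_left₀ (by have := hμnn i; positivity) (keyle i) 2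
  · refine ⟨j, Finset.mem_univ j, ?_⟩
    refine mul_lt_mul_of_pos_right ?_
      (lt_of_le_of_ne (sq_nonneg _) (Ne.symm (pow_ne_zero 2 hj')))
    exact pow_lt_pow_left₀ (key j (hpos j hj')) (by have := hμnn j; positivity) (by norm_num)
end
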